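/- Let Ω = ⋃_{k=1}^∞ I_k, where (I_k)_{k∈ℕ} is a collection of pairwise disjoint nonempty open intervals in ℝ, and let ψ : Ω → Ω be injective and continuous. Then the following are equivalent: (1) ψ has no periodic points, i.e., ψ_n(x) ≠ x for every x ∈ Ω and every n ≥ 1; (2) ψ is run-away; (3) ψ is strongly run-away. -/

import Mathlib

/-!
A continuous injective map of an interval is strictly monotone, so its square is monotone. A
monotone self-map `g` of an open interval without fixed points moves every point in the same
direction, and an orbit that stayed inside a compact subinterval would converge to a fixed point;
by monotonicity the escape is uniform on compact sets.

By connectedness `ψ` maps each interval `I k` into a single `I (σ k)`. A compact set meets only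
finitely many intervals. If the `σ`-orbit of `k` returns infinitely often to `j`, then `j` is
`σ`-periodic with some period `p` and `g = ψ^[2p]` is as above on `I j`; otherwise the images of
`I k` eventually never meet `I j`.
-/

open Set Function Filter Topology

theorem MonotoneOn.iterate {α : Type*} [Preorder α] {f : α → α} {J : Set α} (hf : MonotoneOn f J)
    (hmaps : MapsTo f J J) : ∀ n, MonotoneOn f^[n] J
  | 0 => monotoneOn_id
  | n + 1 => (hf.iterate hmaps n).comp hf hmaps

section Order

variable {α : Type*} [ConditionallyCompleteLinearOrder α] [TopologicalSpace α] [OrderTopology α]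

theorem ContinuousOn.strictMonoOn_or_strictAntiOn_of_injOn [DenselyOrdered α]
    {δ : Type*} [LinearOrder δ] [TopologicalSpace δ] [OrderClosedTopology δ]
    {J : Set α} [J.OrdConnected] {f : α → δ} (hf : ContinuousOn f J) (hinj : InjOn f J) :
    StrictMonoOn f J ∨ StrictAntiOn f J := by
  rcases isEmpty_or_nonempty J with hJ | ⟨⟨a, ha⟩⟩
  · exact Or.inl fun a ha => (hJ.false ⟨a, ha⟩).elim
  have : Inhabited J := ⟨⟨a, ha⟩⟩
  exact (Continuous.strictMono_of_inj hf.domRestrict hinj.injective).imp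
    strictMonoOn_iff_strictMono.2 strictAntiOn_iff_strictAnti.2

theorem monotoneOn_comp_self_of_injOn [DenselyOrdered α] {J : Set α} [J.OrdConnected]
    {f : α → α} (hmaps : MapsTo f J J) (hf : ContinuousOn f J) (hinj : InjOn f J) :
    MonotoneOn (f ∘ f) J := by
  rcases hf.strictMonoOn_or_strictAntiOn_of_injOn hinj with h | h
  · exact (h.comp h hmaps).monotoneOn
  · exact (h.comp h hmaps).monotoneOn

theorem forall_lt_apply_or_forall_apply_lt {J : Set α} (hJ : IsPreconnected J) {f : α → α}
    (hf : ContinuousOn f J) (hfix : ∀ x ∈ J, f x ≠ x) :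
    (∀ x ∈ J, x < f x) ∨ ∀ x ∈ J, f x < x := by
  by_contra! h
  obtain ⟨⟨a, ha, hfa⟩, b, hb, hfb⟩ := h
  obtain ⟨x, hx, hfx⟩ := hJ.intermediate_value₂ ha hb hf continuousOn_id hfa hfb
  exact hfix x hx hfx

/-- An increasing orbit that stayed below a point of `J` would converge inside `J` to a fixed
point. -/
theorem eventually_lt_iterate_of_lt_apply {J : Set α} (hJo : IsOpen J) (hJc : J.OrdConnected)
    {f : α → α} (hmaps : MapsTo f J J) (hf : ContinuousOn f J) (hlt : ∀ x ∈ J, x < f x)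
    {x M : α} (hx : x ∈ J) (hM : M ∈ J) : ∀ᶠ n in atTop, M < f^[n] x := by
  have hmono : StrictMono fun n => f^[n] x := strictMono_nat_of_lt_succ fun n => by
    rw [iterate_succ_apply']
    exact hlt _ (hmaps.iterate n hx)
  by_contra h
  simp only [not_eventually, not_lt] at h
  have hle : ∀ n, f^[n] x ≤ M := fun n => by
    obtain ⟨m, hnm, hm⟩ := h.forall_exists_of_atTop n
    exact (hmono.monotone hnm).trans hm
  have hbdd : BddAbove (range fun n => f^[n] x) := ⟨M, forall_mem_range.2 hle⟩
  have hlim := tendsto_atTop_ciSup hmono.monotone hbdd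
  have hl : (⨆ n, f^[n] x) ∈ J := hJc.out hx hM ⟨le_ciSup hbdd 0, ciSup_le hle⟩
  exact (hlt _ hl).ne' (isFixedPt_of_tendsto_iterate hlim (hf.continuousAt (hJo.mem_nhds hl)))

theorem eventually_disjoint_image_iterate_of_lt_apply {J : Set α} (hJo : IsOpen J)
    (hJc : J.OrdConnected) {f : α → α} (hmaps : MapsTo f J J) (hf : ContinuousOn f J)
    (hmono : MonotoneOn f J) (hlt : ∀ x ∈ J, x < f x) {C D : Set α} (hC : IsCompact C)
    (hCJ : C ⊆ J) (hD : IsCompact D) (hDJ : D ⊆ J) :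
    ∀ᶠ n in atTop, Disjoint (f^[n] '' C) D := by
  rcases C.eq_empty_or_nonempty with rfl | hCne
  · simp
  rcases D.eq_empty_or_nonempty with rfl | hDne
  · simp
  have ha := hC.sInf_mem hCne
  filter_upwards [eventually_lt_iterate_of_lt_apply hJo hJc hmaps hf hlt (hCJ ha)
    (hDJ (hD.sSup_mem hDne))] with n hn
  rw [disjoint_left]
  rintro _ ⟨x, hx, rfl⟩ hxD
  have hax : f^[n] (sInf C) ≤ f^[n] x :=
    hmono.iterate hmaps n (hCJ ha) (hCJ hx) (csInf_le hC.bddBelow hx)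
  exact (hn.trans_le hax).not_ge (le_csSup hD.bddAbove hxD)

/-- Either every point moves up, or every point moves down and the order dual reduces to the
first case. -/
theorem eventually_disjoint_image_iterate {J : Set α} (hJo : IsOpen J) (hJc : IsPreconnected J)
    {f : α → α} (hmaps : MapsTo f J J) (hf : ContinuousOn f J) (hmono : MonotoneOn f J)
    (hfix : ∀ x ∈ J, f x ≠ x) {C D : Set α} (hC : IsCompact C) (hCJ : C ⊆ J) (hD : IsCompact D)
    (hDJ : D ⊆ J) : ∀ᶠ n in atTop, Disjoint (f^[n] '' C) D := by
  rcases forall_lt_apply_or_forall_apply_lt hJc hf hfix with hlt | hgt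
  · exact eventually_disjoint_image_iterate_of_lt_apply hJo hJc.ordConnected hmaps hf hmono hlt
      hC hCJ hD hDJ
  · exact eventually_disjoint_image_iterate_of_lt_apply (α := αᵒᵈ) hJo
      (IsPreconnected.ordConnected (α := αᵒᵈ) hJc) hmaps hf hmono.dual hgt hC hCJ hD hDJ

end Order

theorem Nat.eventually_atTop_of_forall_mul_add {q : ℕ} (hq : 0 < q) {P : ℕ → Prop}
    (h : ∀ r < q, ∀ᶠ t in atTop, P (q * t + r)) : ∀ᶠ n in atTop, P n := by
  obtain ⟨T, hT⟩ := eventually_atTop.1 ((eventually_all_finite (finite_Iio q)).2 h)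
  refine eventually_atTop.2 ⟨T * q, fun n hn => ?_⟩
  rw [← Nat.div_add_mod n q]
  exact hT _ ((Nat.le_div_iff_mul_le hq).2 hn) _ (Nat.mod_lt n hq)

theorem IsPreconnected.exists_subset_of_pairwise_disjoint {X ι : Type*} [TopologicalSpace X]
    {U : ι → Set X} (hU : ∀ i, IsOpen (U i)) (hdisj : Pairwise (Disjoint on U)) {S : Set X}
    (hS : IsPreconnected S) (hSne : S.Nonempty) (hSU : S ⊆ ⋃ i, U i) : ∃ i, S ⊆ U i := by
  obtain ⟨x, hx⟩ := hSne
  obtain ⟨i, hxi⟩ := mem_iUnion.1 (hSU hx)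
  refine ⟨i, hS.subset_left_of_subset_union (hU i)
    (isOpen_iUnion fun j => isOpen_iUnion fun (_ : j ≠ i) => hU j) ?_ ?_ ⟨x, hx, hxi⟩⟩
  · exact disjoint_iUnion₂_right.2 fun j hji => hdisj (Ne.symm hji)
  · intro y hy
    obtain ⟨j, hyj⟩ := mem_iUnion.1 (hSU hy)
    rcases eq_or_ne j i with rfl | hji
    · exact Or.inl hyj
    · exact Or.inr (mem_biUnion hji hyj)

theorem IsCompact.inter_of_pairwise_disjoint {X ι : Type*} [TopologicalSpace X]
    {U : ι → Set X} (hU : ∀ i, IsOpen (U i)) (hdisj : Pairwise (Disjoint on U)) {K : Set X}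
    (hK : IsCompact K) (hKU : K ⊆ ⋃ i, U i) (i : ι) : IsCompact (K ∩ U i) := by
  convert hK.diff (isOpen_iUnion fun j => isOpen_iUnion fun (_ : j ≠ i) => hU j) using 1
  ext x
  simp only [mem_inter_iff, Set.mem_sdiff, mem_iUnion, not_exists]
  refine ⟨fun ⟨hxK, hxi⟩ => ⟨hxK, fun j hji hxj => (hdisj hji).ne_of_mem hxj hxi rfl⟩,
    fun ⟨hxK, hx⟩ => ⟨hxK, ?_⟩⟩
  obtain ⟨j, hxj⟩ := mem_iUnion.1 (hKU hxK)
  by_cases hji : j = i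
  · exact hji ▸ hxj
  · exact (hx j hji hxj).elim

theorem Set.mapsTo_iterate_of_forall_mapsTo {X ι : Type*} {s : ι → Set X} {f : X → X}
    {σ : ι → ι} (h : ∀ i, MapsTo f (s i) (s (σ i))) : ∀ n i, MapsTo f^[n] (s i) (s (σ^[n] i))
  | 0, _ => mapsTo_id _
  | n + 1, i => (mapsTo_iterate_of_forall_mapsTo h n (σ i)).comp (h i)

theorem Set.mapsTo_iUnion_of_forall_mapsTo {X ι : Type*} {s : ι → Set X} {f : X → X}
    {σ : ι → ι} (h : ∀ i, MapsTo f (s i) (s (σ i))) : MapsTo f (⋃ i, s i) (⋃ i, s i) :=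
  (mapsTo_iUnion_iUnion h).mono_right (iUnion_subset fun i => subset_iUnion s (σ i))

section Components

variable {α ι : Type*} [ConditionallyCompleteLinearOrder α] [TopologicalSpace α] [OrderTopology α]
  [DenselyOrdered α] {I : ι → Set α} {f : α → α} {σ : ι → ι}

/-- Inside a periodic component, `f^[2p]` is a monotone fixed-point-free self-map; the other
residues modulo `2p` land in different components. -/
theorem eventually_disjoint_image_iterate_of_isPeriodicPt (hopen : ∀ i, IsOpen (I i))
    (hconn : ∀ i, IsPreconnected (I i)) (hdisj : Pairwise (Disjoint on I))
    (hσ : ∀ i, MapsTo f (I i) (I (σ i))) (hcont : ContinuousOn f (⋃ i, I i))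
    (hinj : InjOn f (⋃ i, I i)) (hper : ∀ x ∈ ⋃ i, I i, ∀ n, 1 ≤ n → f^[n] x ≠ x)
    {j : ι} {p : ℕ} (hp : 0 < p) (hj : IsPeriodicPt σ p j) {C D : Set α} (hC : IsCompact C)
    (hCj : C ⊆ I j) (hD : IsCompact D) (hDj : D ⊆ I j) :
    ∀ᶠ n in atTop, Disjoint (f^[n] '' C) D := by
  have hiter := mapsTo_iterate_of_forall_mapsTo hσ
  have hmaps := mapsTo_iUnion_of_forall_mapsTo hσ
  have hIj := subset_iUnion I j
  have hq : IsPeriodicPt σ (p * 2) j := hj.mul_const 2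
  have hpj : MapsTo f^[p] (I j) (I j) := by simpa only [hj.eq] using hiter p j
  have hqj : MapsTo f^[p * 2] (I j) (I j) := by simpa only [hq.eq] using hiter (p * 2) j
  have : (I j).OrdConnected := (hconn j).ordConnected
  have hmono : MonotoneOn f^[p * 2] (I j) := by
    rw [mul_two, iterate_add]
    exact monotoneOn_comp_self_of_injOn hpj ((hcont.iterate hmaps p).mono hIj)
      ((hinj.iterate hmaps p).mono hIj)
  have hsplit : ∀ t r, f^[p * 2 * t + r] = (f^[p * 2])^[t] ∘ f^[r] := fun t r => by
    rw [iterate_add, iterate_mul]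
  refine Nat.eventually_atTop_of_forall_mul_add (by omega : 0 < p * 2) fun r _ => ?_
  have hCr : f^[r] '' C ⊆ I (σ^[r] j) := ((hiter r j).mono_left hCj).image_subset
  by_cases hrj : σ^[r] j = j
  · rw [hrj] at hCr
    filter_upwards [eventually_disjoint_image_iterate (hopen j) (hconn j) hqj
      ((hcont.iterate hmaps _).mono hIj) hmono (fun x hx => hper x (hIj hx) _ (by omega))
      (hC.image_of_continuousOn ((hcont.iterate hmaps r).mono (hCj.trans hIj))) hCr hD hDj]
      with t ht
    rwa [hsplit, image_comp]
  · refine Eventually.of_forall fun t => ((hdisj hrj).mono_left ?_).mono_right hDj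
    have hσr : σ^[p * 2 * t + r] j = σ^[r] j := by
      rw [add_comm, iterate_add_apply, (hq.mul_const t).eq]
    exact hσr ▸ ((hiter (p * 2 * t + r) j).mono_left hCj).image_subset

/-- Either the component orbit of `i` eventually avoids `j`, or it enters `j` and `j` is
periodic. -/
theorem eventually_disjoint_image_iterate_of_subset (hopen : ∀ i, IsOpen (I i))
    (hconn : ∀ i, IsPreconnected (I i)) (hdisj : Pairwise (Disjoint on I))
    (hσ : ∀ i, MapsTo f (I i) (I (σ i))) (hcont : ContinuousOn f (⋃ i, I i))
    (hinj : InjOn f (⋃ i, I i)) (hper : ∀ x ∈ ⋃ i, I i, ∀ n, 1 ≤ n → f^[n] x ≠ x)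
    {i j : ι} {C D : Set α} (hC : IsCompact C) (hCi : C ⊆ I i) (hD : IsCompact D)
    (hDj : D ⊆ I j) : ∀ᶠ n in atTop, Disjoint (f^[n] '' C) D := by
  have hiter := mapsTo_iterate_of_forall_mapsTo hσ
  by_cases hfreq : ∃ᶠ n in atTop, σ^[n] i = j
  · obtain ⟨n₁, hn₁⟩ := hfreq.exists
    obtain ⟨n₂, hn₁₂, hn₂⟩ := hfreq.forall_exists_of_atTop (n₁ + 1)
    have hj : IsPeriodicPt σ (n₂ - n₁) j := by
      rw [IsPeriodicPt, IsFixedPt, ← hn₁, ← iterate_add_apply, Nat.sub_add_cancel (by omega), hn₂,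
        hn₁]
    have hC' : f^[n₁] '' C ⊆ I j := hn₁ ▸ ((hiter n₁ i).mono_left hCi).image_subset
    have hmaps := mapsTo_iUnion_of_forall_mapsTo hσ
    have hC'c : IsCompact (f^[n₁] '' C) :=
      hC.image_of_continuousOn ((hcont.iterate hmaps n₁).mono (hCi.trans (subset_iUnion I i)))
    filter_upwards [(tendsto_sub_atTop_nat n₁).eventually
      (eventually_disjoint_image_iterate_of_isPeriodicPt hopen hconn hdisj hσ hcont hinj hper
        (by omega) hj hC'c hC' hD hDj), eventually_ge_atTop n₁] with n h hn
    rwa [← image_comp, ← iterate_add, Nat.sub_add_cancel hn] at h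
  · filter_upwards [not_frequently.1 hfreq] with n hn
    exact ((hdisj hn).mono_left ((hiter n i).mono_left hCi).image_subset).mono_right hDj

/-- On each component `f` maps into a single component, and a compact set meets only finitely
many components. -/
theorem eventually_disjoint_image_iterate_self (hopen : ∀ i, IsOpen (I i))
    (hconn : ∀ i, IsPreconnected (I i)) (hdisj : Pairwise (Disjoint on I))
    (hmaps : MapsTo f (⋃ i, I i) (⋃ i, I i))
    (hcont : ContinuousOn f (⋃ i, I i)) (hinj : InjOn f (⋃ i, I i))
    (hper : ∀ x ∈ ⋃ i, I i, ∀ n, 1 ≤ n → f^[n] x ≠ x) {K : Set α} (hK : IsCompact K)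
    (hKI : K ⊆ ⋃ i, I i) : ∀ᶠ n in atTop, Disjoint (f^[n] '' K) K := by
  have hσ : ∀ i, ∃ j, MapsTo f (I i) (I j) := fun i => by
    rcases (I i).eq_empty_or_nonempty with h | h
    · exact ⟨i, h ▸ mapsTo_empty _ _⟩
    · have hIi := subset_iUnion I i
      obtain ⟨j, hj⟩ := ((hconn i).image f (hcont.mono hIi)).exists_subset_of_pairwise_disjoint
        hopen hdisj (h.image f) (hmaps.mono_left hIi).image_subset
      exact ⟨j, mapsTo_iff_image_subset.2 hj⟩
  choose σ hσ using hσ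
  obtain ⟨s, hs⟩ := hK.elim_finite_subcover I hopen hKI
  have hKs : K ⊆ ⋃ i ∈ s, K ∩ I i := fun x hx => by
    obtain ⟨i, hi, hxi⟩ := mem_iUnion₂.1 (hs hx)
    exact mem_iUnion₂.2 ⟨i, hi, hx, hxi⟩
  have hpieces := fun i j => eventually_disjoint_image_iterate_of_subset hopen hconn hdisj hσ
    hcont hinj hper (hK.inter_of_pairwise_disjoint hopen hdisj hKI i) inter_subset_right
    (hK.inter_of_pairwise_disjoint hopen hdisj hKI j) inter_subset_right
  filter_upwards [(eventually_all_finset s).2 fun i _ => (eventually_all_finset s).2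
    fun j _ => hpieces j i] with n hn
  refine Disjoint.mono (image_mono hKs) hKs ?_
  simp only [image_iUnion₂, disjoint_iUnion₂_left, disjoint_iUnion₂_right]
  exact hn

end Components

def IsRunAway {X : Type*} [TopologicalSpace X] (f : X → X) : Prop :=
  ∀ K : Set X, IsCompact K → ∃ n : ℕ, 1 ≤ n ∧ (f^[n] '' K) ∩ K = ∅

def IsStronglyRunAway {X : Type*} [TopologicalSpace X] (f : X → X) : Prop :=
  ∀ K : Set X, IsCompact K → ∃ N : ℕ, ∀ n, N ≤ n → (f^[n] '' K) ∩ K = ∅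

section RunAway

variable {X : Type*} [TopologicalSpace X] {f : X → X}

theorem IsStronglyRunAway.isRunAway (h : IsStronglyRunAway f) : IsRunAway f := fun K hK =>
  let ⟨N, hN⟩ := h K hK
  ⟨N + 1, by omega, hN _ (by omega)⟩

/-- A periodic orbit is a finite, hence compact, set mapped into itself by every iterate. -/
theorem IsRunAway.iterate_ne_self (h : IsRunAway f) (x : X) {m : ℕ} (hm : 1 ≤ m) :
    f^[m] x ≠ x := by
  intro hx
  obtain ⟨n, -, hn⟩ := h _ ((finite_Iio m).image fun i => f^[i] x).isCompact
  have : f^[n] x ∈ f^[n] '' ((fun i => f^[i] x) '' Iio m) ∩ (fun i => f^[i] x) '' Iio m :=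
    ⟨⟨x, ⟨0, hm, rfl⟩, rfl⟩, ⟨n % m, Nat.mod_lt n hm, IsPeriodicPt.iterate_mod_apply hx n⟩⟩
  rwa [hn] at this

theorem isStronglyRunAway_of_semiconj {s : Set X} {ψ : s → s} {F : X → X}
    (hF : Semiconj Subtype.val ψ F)
    (h : ∀ K, IsCompact K → K ⊆ s → ∀ᶠ n in atTop, Disjoint (F^[n] '' K) K) :
    IsStronglyRunAway ψ := by
  intro K hK
  obtain ⟨N, hN⟩ := eventually_atTop.1
    (h _ (hK.image continuous_subtype_val) (image_subset_iff.2 fun x _ => x.2))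
  refine ⟨N, fun n hn => disjoint_iff_inter_eq_empty.1 ?_⟩
  rw [← disjoint_image_iff Subtype.val_injective, (hF.iterate_right n).set_image]
  exact hN n hn

end RunAway

namespace Function.Semiconj

variable {X : Type*} {s : Set X} {ψ : s → s} {F : X → X}

theorem mapsTo_of_subtypeVal (hF : Semiconj Subtype.val ψ F) : MapsTo F s s := fun x hx =>
  hF ⟨x, hx⟩ ▸ (ψ ⟨x, hx⟩).2

theorem injOn_of_subtypeVal (hF : Semiconj Subtype.val ψ F) (hψ : Injective ψ) : InjOn F s := by
  intro x hx y hy h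
  have : ψ ⟨x, hx⟩ = ψ ⟨y, hy⟩ := Subtype.ext (by rw [hF, hF]; exact h)
  exact congrArg Subtype.val (hψ this)

theorem continuousOn_of_subtypeVal [TopologicalSpace X] (hF : Semiconj Subtype.val ψ F)
    (hψ : Continuous ψ) : ContinuousOn F s := by
  rw [continuousOn_iff_continuous_domRestrict]
  convert continuous_subtype_val.comp hψ
  exact funext fun x => (hF x).symm

end Function.Semiconj

theorem stmt_17_general (I : ℕ → Set ℝ)
    (hopen : ∀ k, IsOpen (I k))
    (hconn : ∀ k, IsPreconnected (I k))
    (hdisj : ∀ i j, i ≠ j → I i ∩ I j = ∅)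
    (Ω : Set ℝ) (hΩ : Ω = ⋃ k, I k)
    (ψ : ↥Ω → ↥Ω) (hinj : Function.Injective ψ) (hcont : Continuous ψ) :
    List.TFAE [
      ∀ x : ↥Ω, ∀ n : ℕ, 1 ≤ n → ψ^[n] x ≠ x,
      ∀ K : Set ↥Ω, IsCompact K → ∃ n : ℕ, 1 ≤ n ∧ (ψ^[n] '' K) ∩ K = ∅,
      ∀ K : Set ↥Ω, IsCompact K → ∃ N : ℕ, ∀ n, N ≤ n → (ψ^[n] '' K) ∩ K = ∅ ] := by
  subst hΩ
  obtain ⟨F, hF⟩ : ∃ F : ℝ → ℝ, Semiconj Subtype.val ψ F :=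
    ⟨_, fun x => (Subtype.val_injective.extend_apply (Subtype.val ∘ ψ) id x).symm⟩
  tfae_have 3 → 2 := IsStronglyRunAway.isRunAway
  tfae_have 2 → 1 := fun h x _ => IsRunAway.iterate_ne_self h x
  tfae_have 1 → 3 := fun h => isStronglyRunAway_of_semiconj hF fun K hK hKI =>
    eventually_disjoint_image_iterate_self hopen hconn
      (fun i j hij => disjoint_iff_inter_eq_empty.2 (hdisj i j hij)) hF.mapsTo_of_subtypeVal
      (hF.continuousOn_of_subtypeVal hcont) (hF.injOn_of_subtypeVal hinj)
      (fun x hx n hn hfx => h ⟨x, hx⟩ n hn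
        (Subtype.val_injective ((hF.iterate_right n ⟨x, hx⟩).trans hfx)))
      hK hKI
  tfae_finish

/-- For an injective continuous self-map `ψ` of a countable union of pairwise disjoint
nonempty open intervals, the following are equivalent: (1) `ψ` has no periodic points;
(2) `ψ` is run-away; (3) `ψ` is strongly run-away. -/
theorem stmt_17 (I : ℕ → Set ℝ)
    (hopen : ∀ k, IsOpen (I k)) (hne : ∀ k, (I k).Nonempty)
    (hconn : ∀ k, IsPreconnected (I k))
    (hdisj : ∀ i j, i ≠ j → I i ∩ I j = ∅)
    (Ω : Set ℝ) (hΩ : Ω = ⋃ k, I k)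
    (ψ : ↥Ω → ↥Ω) (hinj : Function.Injective ψ) (hcont : Continuous ψ) :
    List.TFAE [
      ∀ x : ↥Ω, ∀ n : ℕ, 1 ≤ n → ψ^[n] x ≠ x,
      ∀ K : Set ↥Ω, IsCompact K → ∃ n : ℕ, 1 ≤ n ∧ (ψ^[n] '' K) ∩ K = ∅,
      ∀ K : Set ↥Ω, IsCompact K → ∃ N : ℕ, ∀ n, N ≤ n → (ψ^[n] '' K) ∩ K = ∅ ] :=
  stmt_17_general I hopen hconn hdisj Ω hΩ ψ hinj hcont
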